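/- Assume n > 0 and let r = k(d−1) + n·d(d−1)/2 − (d−1). Then every irreducible r-marking μ on the curve Γ is equivalent (under D-moves and T-moves) to an r-marking μ' satisfying property (*): for all distinct components C, C' of Γ, μ'_{C,C'} = C.C' − 1 when L_d ∈ {C, C'}, and μ'_{C,C'} = C.C' otherwise. -/
import Mathlib


namespace SeveriMarkings

/-- Components of the curve Γ: `L_1, …, L_d` (left) and `F_1, …, F_k` (right). -/
abbrev Comp (d k : ℕ) := Sum (Fin d) (Fin k)

/-- Nodes (edges of the multigraph `G(n,d,k)`): `n` edges between `L_i` and `L_j` for `i < j`,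
and one edge between each `L_i` and each `F_j`. -/
abbrev Node (n d k : ℕ) :=
  Sum (({p : Fin d × Fin d // p.1 < p.2}) × Fin n) (Fin d × Fin k)

/-- The two endpoints of a node. -/
def ends {n d k : ℕ} : Node n d k → Comp d k × Comp d k
  | Sum.inl e => (Sum.inl e.1.1.1, Sum.inl e.1.1.2)
  | Sum.inr e => (Sum.inl e.1, Sum.inr e.2)

/-- `joins e C C'` means the node `e` lies in `C ∩ C'`. -/
def joins {n d k : ℕ} (e : Node n d k) (C C' : Comp d k) : Prop :=
  ends e = (C, C') ∨ ends e = (C', C)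

/-- `touches e C` means the node `e` is incident to the component `C`. -/
def touches {n d k : ℕ} (e : Node n d k) (C : Comp d k) : Prop :=
  (ends e).1 = C ∨ (ends e).2 = C

/-- The simple graph on the components obtained after deleting a set `E` of edges:
two components are adjacent if some remaining edge joins them. Its connectivity is
equivalent to connectivity of the multigraph obtained from `G(n,d,k)` by deleting `E`. -/
def remGraph (n d k : ℕ) (E : Set (Node n d k)) : SimpleGraph (Comp d k) :=
  SimpleGraph.fromRel (fun u v => ∃ e, e ∉ E ∧ ends e = (u, v))

/-- A marking `μ` (an injective tuple of nodes) is irreducible if deleting its entries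
from `G(n,d,k)` leaves a connected (multi)graph. -/
def IsIrreducible {n d k r : ℕ} (μ : Fin r → Node n d k) : Prop :=
  (remGraph n d k (Set.range μ)).Connected

/-- The intersection number `C.C'`: the number of edges between `C` and `C'`. -/
noncomputable def interNum (n d k : ℕ) (C C' : Comp d k) : ℕ :=
  Nat.card {e : Node n d k // joins e C C'}

/-- `μ_{C,C'}`: the number of entries of `μ` lying in `C ∩ C'`. -/
noncomputable def markCount {n d k r : ℕ} (μ : Fin r → Node n d k) (C C' : Comp d k) : ℕ :=
  Nat.card {i : Fin r // joins (μ i) C C'}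

/-- `μ_C`: the number of entries of `μ` incident to `C`. -/
noncomputable def compCount {n d k r : ℕ} (μ : Fin r → Node n d k) (C : Comp d k) : ℕ :=
  Nat.card {i : Fin r // touches (μ i) C}

/-- A single D-move. -/
def DMove {n d k r : ℕ} (μ μ' : Fin r → Node n d k) : Prop :=
  ∃ (D D' : Comp d k) (q q' : Node n d k),
    D ≠ D' ∧ q ≠ q' ∧ joins q D D' ∧ joins q' D D' ∧
    ( (q ∉ Set.range μ ∧ ∃ i, μ i = q' ∧ μ' = Function.update μ i q)
    ∨ (q' ∉ Set.range μ ∧ ∃ i, μ i = q ∧ μ' = Function.update μ i q')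
    ∨ (∃ i j, μ i = q ∧ μ j = q' ∧ μ' = μ ∘ Equiv.swap i j)
    ∨ (q ∉ Set.range μ ∧ q' ∉ Set.range μ ∧ μ' = μ) )

/-- A single T-move. -/
def TMove {n d k r : ℕ} (μ μ' : Fin r → Node n d k) : Prop :=
  ∃ (D D' D'' : Comp d k) (q q' q'' : Node n d k),
    D ≠ D' ∧ D ≠ D'' ∧ D' ≠ D'' ∧
    joins q D' D'' ∧ joins q' D D'' ∧ joins q'' D D' ∧
    ( (q' ∈ Set.range μ ∧ μ' = μ)
    ∨ (q' ∉ Set.range μ ∧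
        ( (q'' ∉ Set.range μ ∧ ∃ i, μ i = q ∧ μ' = Function.update μ i q'')
        ∨ (q ∉ Set.range μ ∧ ∃ i, μ i = q'' ∧ μ' = Function.update μ i q)
        ∨ (∃ i j, μ i = q ∧ μ j = q'' ∧ μ' = μ ∘ Equiv.swap i j)
        ∨ (q ∉ Set.range μ ∧ q'' ∉ Set.range μ ∧ μ' = μ))) )

/-- Equivalence of markings: a finite sequence of D-moves and T-moves. -/
def MarkEquiv {n d k r : ℕ} (μ μ' : Fin r → Node n d k) : Prop :=
  Relation.ReflTransGen (fun a b => DMove a b ∨ TMove a b) μ μ'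

/-- Property (*) relative to the distinguished component `Ld`. -/
def PropertyStar {n d k r : ℕ} (Ld : Comp d k) (μ : Fin r → Node n d k) : Prop :=
  ∀ C C' : Comp d k, C ≠ C' →
    markCount μ C C' =
      if Ld = C ∨ Ld = C' then interNum n d k C C' - 1 else interNum n d k C C'

section Helpers

variable {n d k : ℕ}

lemma ends_ne (e : Node n d k) : (ends e).1 ≠ (ends e).2 := by
  cases e with
  | inl e =>
    simp only [ends, ne_eq, Sum.inl.injEq]
    intro h
    exact absurd e.1.2 (by rw [h]; exact lt_irrefl _)
  | inr e => simp [ends]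

lemma joins_symm {e : Node n d k} {C C' : Comp d k} (h : joins e C C') : joins e C' C :=
  h.symm

lemma joins_ne {e : Node n d k} {C C' : Comp d k} (h : joins e C C') : C ≠ C' := by
  rcases h with h | h
  · intro hcc; exact ends_ne e (by rw [h, hcc])
  · intro hcc; exact ends_ne e (by rw [h, hcc])

lemma joins_touches {e : Node n d k} {C C' : Comp d k} (h : joins e C C') : touches e C := by
  rcases h with h | h
  · exact Or.inl (by rw [h])
  · exact Or.inr (by rw [h])

lemma joins_pair {e : Node n d k} {A B A' B' : Comp d k}
    (h : joins e A B) (h' : joins e A' B') :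
    (A = A' ∧ B = B') ∨ (A = B' ∧ B = A') := by
  rcases h with h | h <;> rcases h' with h' | h' <;>
    rw [h] at h' <;> simp only [Prod.mk.injEq] at h' <;> tauto

/-- the endpoint of `e` other than `C` -/
noncomputable def otherEnd (e : Node n d k) (C : Comp d k) : Comp d k := by
  classical exact if (ends e).1 = C then (ends e).2 else (ends e).1

lemma joins_otherEnd {e : Node n d k} {C : Comp d k} (h : touches e C) :
    joins e C (otherEnd e C) := by
  classical
  rcases h with h | h
  · rw [otherEnd, if_pos h]
    exact Or.inl (by rw [← h])
  · have h1 : (ends e).1 ≠ C := by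
      intro hc; exact ends_ne e (by rw [hc, h])
    rw [otherEnd, if_neg h1]
    exact Or.inr (by rw [← h])

lemma otherEnd_ne {e : Node n d k} {C : Comp d k} (h : touches e C) :
    otherEnd e C ≠ C :=
  (joins_ne (joins_symm (joins_otherEnd h)))

lemma eq_otherEnd {e : Node n d k} {C X : Comp d k} (h : joins e C X) :
    X = otherEnd e C := by
  have h2 := joins_otherEnd (joins_touches h)
  rcases joins_pair h h2 with ⟨-, h3⟩ | ⟨h3, h4⟩
  · exact h3
  · exact absurd h3.symm (otherEnd_ne (joins_touches h))

/-- existence of a node between `L_i` and any other component. -/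
lemma exists_join (hn : 0 < n) (i : Fin d) (C : Comp d k) (hne : Sum.inl i ≠ C) :
    ∃ e : Node n d k, joins e (Sum.inl i) C := by
  cases C with
  | inl j =>
    have hij : i ≠ j := by intro h; exact hne (by rw [h])
    rcases lt_or_gt_of_ne hij with h | h
    · exact ⟨Sum.inl ⟨⟨(i, j), h⟩, ⟨0, hn⟩⟩, Or.inl rfl⟩
    · exact ⟨Sum.inl ⟨⟨(j, i), h⟩, ⟨0, hn⟩⟩, Or.inr rfl⟩
  | inr j => exact ⟨Sum.inr (i, j), Or.inl rfl⟩

instance decJoins (e : Node n d k) (C C' : Comp d k) : Decidable (joins e C C') := by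
  unfold joins; infer_instance

instance decTouches (e : Node n d k) (C : Comp d k) : Decidable (touches e C) := by
  unfold touches; infer_instance

instance decRange {r : ℕ} (μ : Fin r → Node n d k) : DecidablePred (· ∈ Set.range μ) :=
  fun e => decidable_of_iff (∃ i, μ i = e) (by simp [Set.mem_range])

lemma remGraph_adj {E : Set (Node n d k)} {u w : Comp d k} :
    (remGraph n d k E).Adj u w ↔ u ≠ w ∧ ∃ e, e ∉ E ∧ joins e u w := by
  rw [remGraph, SimpleGraph.fromRel_adj]
  unfold joins
  constructor
  · rintro ⟨h1, ⟨e, he, h2⟩ | ⟨e, he, h2⟩⟩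
    · exact ⟨h1, e, he, Or.inl h2⟩
    · exact ⟨h1, e, he, Or.inr h2⟩
  · rintro ⟨h1, e, he, h2 | h2⟩
    · exact ⟨h1, Or.inl ⟨e, he, h2⟩⟩
    · exact ⟨h1, Or.inr ⟨e, he, h2⟩⟩

lemma connected_transfer {V : Type*} {G H : SimpleGraph V} (hG : G.Connected)
    (h : ∀ a b, G.Adj a b → H.Reachable a b) : H.Connected := by
  have hne : Nonempty V := hG.nonempty
  refine ⟨fun a b => ?_⟩
  obtain ⟨w⟩ := hG.preconnected a b
  induction w with
  | nil => exact SimpleGraph.Reachable.refl _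
  | cons hadj p ih => exact (h _ _ hadj).trans ih

lemma cut_lemma {V : Type*} {G : SimpleGraph V} (S : Set V) :
    ∀ {a b : V}, G.Walk a b → a ∈ S → b ∉ S →
      ∃ x ∈ S, ∃ y, y ∉ S ∧ G.Adj x y := by
  intro a b w
  induction w with
  | nil => intro h1 h2; exact absurd h1 h2
  | @cons u c b hadj p ih =>
    intro ha hb
    by_cases hc : c ∈ S
    · exact ih hc hb
    · exact ⟨u, ha, c, hc, hadj⟩

lemma card_lt_pairs (d : ℕ) :
    Fintype.card {p : Fin d × Fin d // p.1 < p.2} = d * (d - 1) / 2 := by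
  classical
  rw [Fintype.card_subtype]
  rw [Finset.card_eq_sum_card_fiberwise
    (f := fun p : Fin d × Fin d => p.1) (t := Finset.univ) (fun x _ => Finset.mem_univ _)]
  have hfib : ∀ i : Fin d,
      ((Finset.univ.filter fun p : Fin d × Fin d => p.1 < p.2).filter
        fun p => p.1 = i).card = (Finset.Ioi i).card := by
    intro i
    apply Finset.card_bij (fun p _ => p.2)
    · intro p hp
      simp only [Finset.mem_filter, Finset.mem_univ, true_and] at hp
      simp only [Finset.mem_Ioi]
      rw [← hp.2]; exact hp.1
    · intro p hp p' hp' hpp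
      simp only [Finset.mem_filter, Finset.mem_univ, true_and] at hp hp'
      exact Prod.ext (hp.2.trans hp'.2.symm) hpp
    · intro j hj
      simp only [Finset.mem_Ioi] at hj
      exact ⟨(i, j), by simp [hj], rfl⟩
  simp only [hfib, Fin.card_Ioi]
  rw [Fin.sum_univ_eq_sum_range (fun i => d - 1 - i) d]
  rw [show (fun i => d - 1 - i) = (fun i => (fun j => j) (d - 1 - i)) from rfl]
  rw [Finset.sum_range_reflect (fun j => j) d]
  exact Finset.sum_range_id d

lemma card_node : Fintype.card (Node n d k) = d * (d - 1) / 2 * n + d * k := by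
  simp [Fintype.card_sum, Fintype.card_prod, Fintype.card_fin, card_lt_pairs]

lemma card_comp : Fintype.card (Comp d k) = d + k := by
  simp [Fintype.card_sum, Fintype.card_fin]

lemma compl_range_card {r : ℕ} (μ : Fin r → Node n d k) (hμ : Function.Injective μ) :
    (Finset.univ.filter fun e : Node n d k => e ∉ Set.range μ).card
      = Fintype.card (Node n d k) - r := by
  classical
  have h := Finset.card_filter_add_card_filter_not
    (s := (Finset.univ : Finset (Node n d k))) (p := fun e => e ∈ Set.range μ)
  have h2 : (Finset.univ.filter fun e : Node n d k => e ∈ Set.range μ).card = r := by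
    have heq : (Finset.univ.filter fun e : Node n d k => e ∈ Set.range μ)
        = Finset.image μ Finset.univ := by
      ext e; simp [Set.mem_range, eq_comm]
    rw [heq, Finset.card_image_of_injective _ hμ, Finset.card_univ, Fintype.card_fin]
  rw [Finset.card_univ] at h
  omega

lemma update_injective {α β : Type*} [DecidableEq α] {μ : α → β} (hμ : Function.Injective μ)
    {i : α} {q : β} (hq : q ∉ Set.range μ) : Function.Injective (Function.update μ i q) := by
  intro a b hab
  rcases eq_or_ne a i with ha | ha
  · rcases eq_or_ne b i with hb | hb
    · rw [ha, hb]
    · subst ha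
      rw [Function.update_self, Function.update_of_ne hb] at hab
      exact absurd ⟨b, hab.symm⟩ hq
  · rcases eq_or_ne b i with hb | hb
    · subst hb
      rw [Function.update_self, Function.update_of_ne ha] at hab
      exact absurd ⟨a, hab⟩ hq
    · rw [Function.update_of_ne ha, Function.update_of_ne hb] at hab
      exact hμ hab

lemma markCount_eq {r : ℕ} (μ : Fin r → Node n d k) (hμ : Function.Injective μ)
    (C C' : Comp d k) :
    markCount μ C C'
      = (Finset.univ.filter fun e : Node n d k => e ∈ Set.range μ ∧ joins e C C').card := by
  classical
  rw [markCount]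
  have e1 : {i : Fin r // joins (μ i) C C'}
      ≃ {e : Node n d k // e ∈ Set.range μ ∧ joins e C C'} := by
    refine Equiv.ofBijective (fun i => ⟨μ i.1, ⟨i.1, rfl⟩, i.2⟩) ⟨?_, ?_⟩
    · intro a b hab
      exact Subtype.ext (hμ (congrArg Subtype.val hab))
    · rintro ⟨e, ⟨i, rfl⟩, hj⟩
      exact ⟨⟨i, hj⟩, rfl⟩
  rw [Nat.card_congr e1, Nat.card_eq_fintype_card, Fintype.card_subtype]

lemma interNum_eq (C C' : Comp d k) :
    interNum n d k C C' = (Finset.univ.filter fun e : Node n d k => joins e C C').card := by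
  classical
  rw [interNum, Nat.card_eq_fintype_card, Fintype.card_subtype]

lemma markCount_add_compl {r : ℕ} (μ : Fin r → Node n d k) (hμ : Function.Injective μ)
    (C C' : Comp d k) :
    markCount μ C C'
      + ((Finset.univ.filter fun e : Node n d k => e ∉ Set.range μ).filter
          fun e => joins e C C').card
      = interNum n d k C C' := by
  classical
  rw [markCount_eq μ hμ, interNum_eq]
  rw [Finset.filter_filter]
  have h := Finset.card_filter_add_card_filter_not
    (s := Finset.univ.filter fun e : Node n d k => joins e C C')
    (p := fun e => e ∈ Set.range μ)
  rw [Finset.filter_filter, Finset.filter_filter] at h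
  rw [← h]
  congr 2
  · ext e; simp [and_comm]
  · ext e; simp [and_comm]

end Helpers

section Main

variable {n d k : ℕ}

lemma sum_fiber_one {α : Type*} (s : Finset α) (g : α → ℕ)
    (h1 : ∀ x ∈ s, 1 ≤ g x) (h2 : ∑ x ∈ s, g x = s.card) : ∀ x ∈ s, g x = 1 := by
  have h4 : ∑ x ∈ s, g x = ∑ x ∈ s, ((g x - 1) + 1) :=
    Finset.sum_congr rfl (fun x hx => by have := h1 x hx; omega)
  rw [Finset.sum_add_distrib, Finset.sum_const, smul_eq_mul, mul_one] at h4
  have h3 : ∑ x ∈ s, (g x - 1) = 0 := by omega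
  intro x hx
  have h5 := Finset.sum_eq_zero_iff.mp h3 x hx
  have h6 := h1 x hx
  omega

lemma range_update {α β : Type*} [DecidableEq α] {μ : α → β} (hμ : Function.Injective μ)
    {i : α} {q : β} (hq : q ∉ Set.range μ) (e : β) :
    e ∈ Set.range (Function.update μ i q) ↔ e = q ∨ (e ∈ Set.range μ ∧ e ≠ μ i) := by
  constructor
  · rintro ⟨j, hj⟩
    rcases eq_or_ne j i with rfl | hji
    · rw [Function.update_self] at hj; exact Or.inl hj.symm
    · rw [Function.update_of_ne hji] at hj
      refine Or.inr ⟨⟨j, hj⟩, ?_⟩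
      rw [← hj]
      exact fun h => hji (hμ h)
  · rintro (rfl | ⟨⟨j, hj⟩, hne⟩)
    · exact ⟨i, by rw [Function.update_self]⟩
    · have hji : j ≠ i := by rintro rfl; exact hne hj.symm
      exact ⟨j, by rw [Function.update_of_ne hji]; exact hj⟩

lemma main_aux (hn : 0 < n) (i0 : Fin d) {r : ℕ} :
    ∀ (N : ℕ) (μ : Fin r → Node n d k), Function.Injective μ → IsIrreducible μ →
    (Finset.univ.filter fun e : Node n d k =>
        e ∉ Set.range μ ∧ ¬ touches e (Sum.inl i0)).card = N →
    (Finset.univ.filter fun e : Node n d k => e ∉ Set.range μ).card = d + k - 1 →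
    ∃ μ' : Fin r → Node n d k, Function.Injective μ' ∧ MarkEquiv μ μ' ∧
      PropertyStar (Sum.inl i0 : Comp d k) μ' := by
  intro N
  induction N using Nat.strong_induction_on with
  | _ N ih =>
  intro μ hμ hirr hN hT
  set v : Comp d k := Sum.inl i0 with hv
  rcases Nat.eq_zero_or_pos N with hN0 | hNpos
  · -- base case: every unmarked node touches v
    subst hN0
    rw [Finset.card_eq_zero] at hN
    have hall : ∀ e : Node n d k, e ∉ Set.range μ → touches e v := by
      intro e he
      by_contra hte
      have : e ∈ (Finset.univ.filter fun e : Node n d k =>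
          e ∉ Set.range μ ∧ ¬ touches e v) := by
        rw [Finset.mem_filter]
        exact ⟨Finset.mem_univ e, he, hte⟩
      rw [hN] at this
      exact absurd this (Finset.notMem_empty e)
    -- fiberwise counting
    have hfibmem : ∀ e ∈ (Finset.univ.filter fun e : Node n d k => e ∉ Set.range μ),
        otherEnd e v ∈ Finset.univ.erase v := by
      intro e he
      rw [Finset.mem_filter] at he
      exact Finset.mem_erase.mpr ⟨otherEnd_ne (hall e he.2), Finset.mem_univ _⟩
    have hfib := Finset.card_eq_sum_card_fiberwise hfibmem
    have hcard_er : (Finset.univ.erase v).card = d + k - 1 := by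
      rw [Finset.card_erase_of_mem (Finset.mem_univ v), Finset.card_univ, card_comp]
    have hge1 : ∀ C ∈ Finset.univ.erase v,
        1 ≤ ((Finset.univ.filter fun e : Node n d k => e ∉ Set.range μ).filter
          fun e => otherEnd e v = C).card := by
      intro C hC
      rw [Finset.mem_erase] at hC
      have hCv : C ≠ v := hC.1
      obtain ⟨w⟩ := hirr.preconnected C v
      cases w with
      | nil => exact absurd rfl hCv
      | cons hadj p =>
        rw [remGraph_adj] at hadj
        obtain ⟨hne', e, her, hj⟩ := hadj
        have htv : touches e v := hall e her
        have hoe : otherEnd e v = C := by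
          rcases joins_pair (joins_otherEnd htv) hj with ⟨h1, h2⟩ | ⟨h1, h2⟩
          · exact absurd h1.symm hCv
          · exact h2
        refine Finset.card_pos.mpr ⟨e, ?_⟩
        simp only [Finset.mem_filter, Finset.mem_univ, true_and]
        exact ⟨her, hoe⟩
    have hone := sum_fiber_one _ _ hge1 (by rw [← hfib, hT, hcard_er])
    have htone : ∀ C : Comp d k, C ≠ v →
        ((Finset.univ.filter fun e : Node n d k => e ∉ Set.range μ).filter
          fun e => joins e v C).card = 1 := by
      intro C hCv
      have hfeq : ((Finset.univ.filter fun e : Node n d k => e ∉ Set.range μ).filter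
            fun e => joins e v C)
          = ((Finset.univ.filter fun e : Node n d k => e ∉ Set.range μ).filter
            fun e => otherEnd e v = C) := by
        ext e
        simp only [Finset.mem_filter, Finset.mem_univ, true_and]
        refine and_congr_right fun he => ?_
        constructor
        · intro hj; exact (eq_otherEnd hj).symm
        · intro ho; rw [← ho]; exact joins_otherEnd (hall e he)
      rw [hfeq]
      exact hone C (Finset.mem_erase.mpr ⟨hCv, Finset.mem_univ _⟩)
    refine ⟨μ, hμ, Relation.ReflTransGen.refl, ?_⟩
    intro C C' hcc
    have hsplit := markCount_add_compl μ hμ C C'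
    by_cases hvc : v = C ∨ v = C'
    · rw [if_pos hvc]
      have hone' : ((Finset.univ.filter fun e : Node n d k => e ∉ Set.range μ).filter
          fun e => joins e C C').card = 1 := by
        rcases hvc with rfl | rfl
        · exact htone C' (fun h => hcc h.symm)
        · have hsf : ((Finset.univ.filter fun e : Node n d k => e ∉ Set.range μ).filter
              fun e => joins e C v)
            = ((Finset.univ.filter fun e : Node n d k => e ∉ Set.range μ).filter
              fun e => joins e v C) := by
            ext e
            simp only [Finset.mem_filter]
            exact and_congr_right fun _ => ⟨joins_symm, joins_symm⟩
          rw [hsf]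
          exact htone C hcc
      omega
    · rw [if_neg hvc]
      push_neg at hvc
      have hzero : ((Finset.univ.filter fun e : Node n d k => e ∉ Set.range μ).filter
          fun e => joins e C C').card = 0 := by
        rw [Finset.card_eq_zero, Finset.filter_eq_empty_iff]
        intro e he
        rw [Finset.mem_filter] at he
        intro hj
        have htv : touches e v := hall e he.2
        rcases joins_pair (joins_otherEnd htv) hj with ⟨h1, h2⟩ | ⟨h1, h2⟩
        · exact hvc.1 h1
        · exact hvc.2 h1
      omega
  · -- inductive step
    have hTne : (Finset.univ.filter fun e : Node n d k =>
        e ∉ Set.range μ ∧ ¬ touches e v).Nonempty := by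
      rw [← Finset.card_pos, hN]; exact hNpos
    obtain ⟨e0, he0⟩ := hTne
    rw [Finset.mem_filter] at he0
    obtain ⟨-, he0r, he0t⟩ := he0
    set S : Set (Comp d k) :=
      {u | u = v ∨ ∃ e, e ∉ Set.range μ ∧ joins e v u} with hS
    have hvS : v ∈ S := Or.inl rfl
    have hw0 : ∃ w0, w0 ∉ S := by
      by_contra hno
      push_neg at hno
      -- then every C ≠ v has an unmarked node to v, forcing too many unmarked nodes at v
      have hfibmem : ∀ e ∈ ((Finset.univ.filter fun e : Node n d k => e ∉ Set.range μ).filter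
          fun e => touches e v), otherEnd e v ∈ Finset.univ.erase v := by
        intro e he
        rw [Finset.mem_filter] at he
        exact Finset.mem_erase.mpr ⟨otherEnd_ne he.2, Finset.mem_univ _⟩
      have hfib := Finset.card_eq_sum_card_fiberwise hfibmem
      have hge1 : ∀ C ∈ Finset.univ.erase v,
          1 ≤ (((Finset.univ.filter fun e : Node n d k => e ∉ Set.range μ).filter
            fun e => touches e v).filter fun e => otherEnd e v = C).card := by
        intro C hC
        rw [Finset.mem_erase] at hC
        rcases hno C with h | ⟨e, her, hj⟩
        · exact absurd h hC.1
        · refine Finset.card_pos.mpr ⟨e, ?_⟩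
          simp only [Finset.mem_filter, Finset.mem_univ, true_and]
          exact ⟨⟨her, joins_touches hj⟩, (eq_otherEnd hj).symm⟩
      have hcard_er : (Finset.univ.erase v).card = d + k - 1 := by
        rw [Finset.card_erase_of_mem (Finset.mem_univ v), Finset.card_univ, card_comp]
      have hlow : d + k - 1 ≤ ((Finset.univ.filter fun e : Node n d k => e ∉ Set.range μ).filter
          fun e => touches e v).card := by
        rw [hfib, ← hcard_er]
        calc (Finset.univ.erase v).card = ∑ _C ∈ Finset.univ.erase v, 1 := by
              rw [Finset.sum_const, smul_eq_mul, mul_one]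
          _ ≤ _ := Finset.sum_le_sum hge1
      have hsub : ((Finset.univ.filter fun e : Node n d k => e ∉ Set.range μ).filter
          fun e => touches e v)
          ⊆ (Finset.univ.filter fun e : Node n d k => e ∉ Set.range μ).erase e0 := by
        intro e he
        rw [Finset.mem_filter] at he
        refine Finset.mem_erase.mpr ⟨?_, he.1⟩
        rintro rfl
        exact he0t he.2
      have hup := Finset.card_le_card hsub
      have he0T : e0 ∈ (Finset.univ.filter fun e : Node n d k => e ∉ Set.range μ) := by
        rw [Finset.mem_filter]
        exact ⟨Finset.mem_univ e0, he0r⟩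
      rw [Finset.card_erase_of_mem he0T, hT] at hup
      have hTpos : 0 < d + k - 1 := by
        rw [← hT]; exact Finset.card_pos.mpr ⟨e0, he0T⟩
      omega
    obtain ⟨w0, hw0S⟩ := hw0
    obtain ⟨wv⟩ := hirr.preconnected v w0
    obtain ⟨x, hxS, y, hyS, hadj⟩ := cut_lemma S wv hvS hw0S
    rw [remGraph_adj] at hadj
    obtain ⟨hxy, q, hqr, hqj⟩ := hadj
    have hyv : y ≠ v := fun h => hyS (h ▸ hvS)
    have hxv : x ≠ v := by
      rintro rfl
      exact hyS (Or.inr ⟨q, hqr, hqj⟩)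
    obtain ⟨q', hq'r, hq'j⟩ : ∃ q', q' ∉ Set.range μ ∧ joins q' v x := by
      rcases hxS with h | h
      · exact absurd h hxv
      · exact h
    have hyall : ∀ e : Node n d k, joins e v y → e ∈ Set.range μ := by
      intro e hj
      by_contra he
      exact hyS (Or.inr ⟨e, he, hj⟩)
    obtain ⟨q'', hq''j⟩ := exists_join (n := n) (k := k) hn i0 y (fun h => hyv h.symm)
    obtain ⟨i, hi⟩ := hyall q'' hq''j
    -- distinctness of nodes
    have hqq'' : q ≠ q'' := by
      rintro rfl
      rcases joins_pair hqj hq''j with ⟨h1, h2⟩ | ⟨h1, h2⟩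
      · exact hxv h1
      · exact hyv h2
    have hqq' : q ≠ q' := by
      rintro rfl
      rcases joins_pair hqj hq'j with ⟨h1, h2⟩ | ⟨h1, h2⟩
      · exact hxv h1
      · exact hyv h2
    set μ' := Function.update μ i q with hμ'def
    have hμ' : Function.Injective μ' := update_injective hμ hqr
    have hmove : TMove μ μ' := by
      refine ⟨v, y, x, q, q', q'', fun h => hyv h.symm, fun h => hxv h.symm,
        fun h => hxy h.symm, joins_symm hqj, hq'j, hq''j, ?_⟩
      exact Or.inr ⟨hq'r, Or.inr (Or.inl ⟨hqr, i, hi, rfl⟩)⟩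
    have hequiv : MarkEquiv μ μ' := Relation.ReflTransGen.single (Or.inr hmove)
    have hq'r' : q' ∉ Set.range μ' := by
      rw [hμ'def, range_update hμ hqr]
      rintro (h | ⟨h, -⟩)
      · exact hqq' h.symm
      · exact hq'r h
    have hq''r' : q'' ∉ Set.range μ' := by
      rw [hμ'def, range_update hμ hqr]
      rintro (h | ⟨-, h⟩)
      · exact hqq'' h.symm
      · exact h hi.symm
    have hirr' : IsIrreducible μ' := by
      refine connected_transfer hirr ?_
      intro a b hab
      rw [remGraph_adj] at hab
      obtain ⟨hab1, e, her, hej⟩ := hab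
      by_cases heq : e = q
      · subst heq
        have hvx' : (remGraph n d k (Set.range μ')).Adj v x :=
          remGraph_adj.mpr ⟨fun h => hxv h.symm, q', hq'r', hq'j⟩
        have hvy' : (remGraph n d k (Set.range μ')).Adj v y :=
          remGraph_adj.mpr ⟨fun h => hyv h.symm, q'', hq''r', hq''j⟩
        rcases joins_pair hej hqj with ⟨rfl, rfl⟩ | ⟨rfl, rfl⟩
        · exact (hvx'.symm.reachable).trans hvy'.reachable
        · exact (hvy'.symm.reachable).trans hvx'.reachable
      · have her' : e ∉ Set.range μ' := by
          rw [hμ'def, range_update hμ hqr]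
          rintro (h | ⟨h, -⟩)
          · exact heq h
          · exact her h
        exact (remGraph_adj.mpr ⟨hab1, e, her', hej⟩).reachable
    have hT' : (Finset.univ.filter fun e : Node n d k => e ∉ Set.range μ').card
        = d + k - 1 := by
      rw [compl_range_card μ' hμ']
      rw [compl_range_card μ hμ] at hT
      exact hT
    -- the measure decreases
    have hqt : ¬ touches q v := by
      intro ht
      rcases joins_pair (joins_otherEnd ht) hqj with ⟨h1, h2⟩ | ⟨h1, h2⟩
      · exact hxv h1.symm
      · exact hyv h1.symm
    have hsub : (Finset.univ.filter fun e : Node n d k =>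
        e ∉ Set.range μ' ∧ ¬ touches e v)
        ⊆ (Finset.univ.filter fun e : Node n d k =>
          e ∉ Set.range μ ∧ ¬ touches e v).erase q := by
      intro e he
      rw [Finset.mem_filter] at he
      obtain ⟨-, her', het⟩ := he
      have heq : e ≠ q := by
        rintro rfl
        exact her' ⟨i, Function.update_self i e μ⟩
      refine Finset.mem_erase.mpr ⟨heq, ?_⟩
      simp only [Finset.mem_filter, Finset.mem_univ, true_and]
      refine ⟨?_, het⟩
      rintro ⟨j, hj⟩
      rcases eq_or_ne j i with rfl | hji
      · rw [hi] at hj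
        exact het (hj ▸ joins_touches hq''j)
      · refine her' ⟨j, ?_⟩
        rw [hμ'def, Function.update_of_ne hji]
        exact hj
    have hqmem : q ∈ (Finset.univ.filter fun e : Node n d k =>
        e ∉ Set.range μ ∧ ¬ touches e v) := by
      simp only [Finset.mem_filter, Finset.mem_univ, true_and]
      exact ⟨hqr, hqt⟩
    have hlt : (Finset.univ.filter fun e : Node n d k =>
        e ∉ Set.range μ' ∧ ¬ touches e v).card < N := by
      calc (Finset.univ.filter fun e : Node n d k =>
          e ∉ Set.range μ' ∧ ¬ touches e v).card
          ≤ ((Finset.univ.filter fun e : Node n d k =>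
            e ∉ Set.range μ ∧ ¬ touches e v).erase q).card := Finset.card_le_card hsub
        _ = N - 1 := by rw [Finset.card_erase_of_mem hqmem, hN]
        _ < N := by omega
    obtain ⟨μ'', hμ'', hequiv'', hstar''⟩ := ih _ hlt μ' hμ' hirr' rfl hT'
    exact ⟨μ'', hμ'', hequiv.trans hequiv'', hstar''⟩

end Main

/-- Step 1 of Lemma 4 of the paper. Assume `n > 0` and let
`r = k(d−1) + n·d(d−1)/2 − (d−1)`. Then every irreducible `r`-marking `μ` on the curve `Γ`
is equivalent (under D-moves and T-moves) to an `r`-marking `μ'` satisfying property (*):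
for all distinct components `C, C'` of `Γ`, `μ'_{C,C'} = C.C' − 1` when `L_d ∈ {C, C'}`,
and `μ'_{C,C'} = C.C'` otherwise. -/
theorem stmt4 (n d k : ℕ) (hn : 0 < n) (hd : 0 < d)
    (μ : Fin (k * (d - 1) + n * (d * (d - 1) / 2) - (d - 1)) → Node n d k)
    (hμ : Function.Injective μ) (hirr : IsIrreducible μ) :
    ∃ μ' : Fin (k * (d - 1) + n * (d * (d - 1) / 2) - (d - 1)) → Node n d k,
      Function.Injective μ' ∧ MarkEquiv μ μ' ∧
      PropertyStar (Sum.inl ⟨d - 1, by omega⟩) μ' := by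
  have hT : (Finset.univ.filter fun e : Node n d k => e ∉ Set.range μ).card = d + k - 1 := by
    rw [compl_range_card μ hμ, card_node]
    have hcd : d - 1 ≤ d * (d - 1) / 2 := by
      rcases Nat.lt_or_ge d 2 with h | h
      · interval_cases d <;> simp
      · rw [Nat.le_div_iff_mul_le (by norm_num)]
        calc (d - 1) * 2 = 2 * (d - 1) := Nat.mul_comm _ _
          _ ≤ d * (d - 1) := Nat.mul_le_mul_right _ h
    rw [show d * (d - 1) / 2 * n = n * (d * (d - 1) / 2) from Nat.mul_comm _ _]
    have hnc : d * (d - 1) / 2 ≤ n * (d * (d - 1) / 2) := Nat.le_mul_of_pos_left _ hn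
    have hk1 : k * (d - 1) + k = k * d := by
      rw [← Nat.mul_succ]
      congr 1
      omega
    have hdk : d * k = k * d := Nat.mul_comm d k
    generalize hA : n * (d * (d - 1) / 2) = A at *
    generalize hK : k * (d - 1) = K at *
    generalize hB : k * d = B at *
    generalize hD : d * k = D at *
    generalize hc : d * (d - 1) / 2 = c at *
    omega
  obtain ⟨μ', h1, h2, h3⟩ := main_aux hn ⟨d - 1, by omega⟩ _ μ hμ hirr rfl hT
  exact ⟨μ', h1, h2, h3⟩

end SeveriMarkings
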